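/- Let K be a field and q ∈ K an element that is not a root of unity. In the quantum plane B = B(q), let I = B(ab−1)(a−1). Then the cyclic left B-module M = B/I is not Artinian. -/

import Mathlib

noncomputable section

open FreeAlgebra

/-- Defining relation of the quantum plane `B(q)`: `a * b = q • (b * a)`, where
`ι K 0` plays the role of `a` and `ι K 1` plays the role of `b`. -/
inductive QuantumPlaneRel (K : Type) [Field K] (q : K) :
    FreeAlgebra K (Fin 2) → FreeAlgebra K (Fin 2) → Prop
  | rel : QuantumPlaneRel K q (ι K (0 : Fin 2) * ι K (1 : Fin 2))
      (q • (ι K (1 : Fin 2) * ι K (0 : Fin 2)))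

/-- The coordinate algebra of the quantum plane `B(q)`. -/
abbrev QuantumPlane (K : Type) [Field K] (q : K) : Type :=
  RingQuot (QuantumPlaneRel K q)

/-- The generator `a` of the quantum plane. -/
def QuantumPlane.a (K : Type) [Field K] (q : K) : QuantumPlane K q :=
  RingQuot.mkAlgHom K (QuantumPlaneRel K q) (ι K (0 : Fin 2))

/-- The generator `b` of the quantum plane. -/
def QuantumPlane.b (K : Type) [Field K] (q : K) : QuantumPlane K q :=
  RingQuot.mkAlgHom K (QuantumPlaneRel K q) (ι K (1 : Fin 2))

/-!
`B(q)` acts on `K[X]` with `a` sending `p(X)` to `p(qX)` and `b` multiplying by `X`. This module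
is generated by `1`, which `a - 1` kills, so `M` surjects onto it. Each `X ^ k • K[X]` is stable
under `a` and `b`, hence a `B(q)`-submodule, and these form a strictly descending chain.
-/

open Polynomial

namespace QuantumPlane

variable (K : Type) [Field K] (q : K)

theorem adjoin_a_b : Algebra.adjoin K {a K q, b K q} = ⊤ := by
  have hrange : Set.range (RingQuot.mkAlgHom K (QuantumPlaneRel K q) ∘ FreeAlgebra.ι K) =
      {a K q, b K q} := by
    ext x
    simp [Fin.exists_fin_two, a, b, eq_comm]
  rw [← hrange, Set.range_comp, Algebra.adjoin_image, FreeAlgebra.adjoin_range_ι,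
    Algebra.map_top, AlgHom.range_eq_top]
  exact RingQuot.mkAlgHom_surjective K _

def polyRep : QuantumPlane K q →ₐ[K] Module.End K K[X] :=
  RingQuot.liftAlgHom K
    ⟨FreeAlgebra.lift K ![(aeval (C q * X)).toLinearMap, Algebra.lmul K K[X] X], by
      rintro _ _ ⟨⟩
      refine LinearMap.ext fun p => ?_
      simp [Algebra.smul_def]
      ring⟩

theorem polyRep_a : polyRep K q (a K q) = (aeval (C q * X)).toLinearMap := by
  simp [polyRep, a]

theorem polyRep_b : polyRep K q (b K q) = Algebra.lmul K K[X] X := by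
  simp [polyRep, b]

theorem X_pow_dvd_polyRep_apply {k : ℕ} {p : K[X]} (hp : X ^ k ∣ p) (c : QuantumPlane K q) :
    X ^ k ∣ polyRep K q c p := by
  have hc : c ∈ Algebra.adjoin K {a K q, b K q} := adjoin_a_b K q ▸ Algebra.mem_top
  induction hc using Algebra.adjoin_induction generalizing p with
  | mem x hx =>
    rcases hx with rfl | rfl
    · obtain ⟨r, rfl⟩ := hp
      rw [polyRep_a]
      simp only [AlgHom.toLinearMap_apply, map_mul, map_pow, aeval_X, mul_pow, mul_assoc]
      exact (dvd_mul_right _ _).mul_left _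
    · rw [polyRep_b]
      exact hp.mul_left X
  | algebraMap r =>
    rw [AlgHom.commutes, Module.algebraMap_end_apply, smul_eq_C_mul]
    exact hp.mul_left _
  | add x y _ _ hx hy =>
    rw [map_add, LinearMap.add_apply]
    exact dvd_add (hx hp) (hy hp)
  | mul x y _ _ hx hy =>
    rw [map_mul, Module.End.mul_apply]
    exact hx (hy hp)

instance : Module (QuantumPlane K q) K[X] :=
  Module.compHom K[X] (polyRep K q).toRingHom

theorem smul_eq_polyRep_apply (c : QuantumPlane K q) (p : K[X]) : c • p = polyRep K q c p := rfl

def xPowMultiples (k : ℕ) : Submodule (QuantumPlane K q) K[X] where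
  carrier := {p | X ^ k ∣ p}
  add_mem' := dvd_add
  zero_mem' := dvd_zero _
  smul_mem' c _ hp := X_pow_dvd_polyRep_apply K q hp c

theorem strictAnti_xPowMultiples : StrictAnti (xPowMultiples K q) := by
  refine strictAnti_nat_of_succ_lt fun k => lt_of_le_of_ne ?_ fun h => ?_
  · exact fun p hp => (pow_dvd_pow X k.le_succ).trans hp
  · have hk : X ^ k ∈ xPowMultiples K q (k + 1) := h ▸ dvd_refl _
    exact k.not_succ_le_self ((pow_dvd_pow_iff X_ne_zero not_isUnit_X).1 hk)

theorem not_isArtinian_polynomial : ¬ IsArtinian (QuantumPlane K q) K[X] :=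
  fun _ => not_strictAnti_of_wellFoundedLT _ (strictAnti_xPowMultiples K q)

theorem span_mul_a_sub_one_le_ker (x : QuantumPlane K q) :
    Ideal.span {x * (a K q - 1)} ≤ LinearMap.ker (LinearMap.toSpanSingleton _ K[X] 1) := by
  have ha : (a K q - 1) • (1 : K[X]) = 0 := by simp [smul_eq_polyRep_apply, polyRep_a]
  rw [Ideal.span_le, Set.singleton_subset_iff, SetLike.mem_coe, LinearMap.mem_ker,
    LinearMap.toSpanSingleton_apply, mul_smul, ha, smul_zero]

theorem surjective_toSpanSingleton_one :
    Function.Surjective (LinearMap.toSpanSingleton (QuantumPlane K q) K[X] 1) := fun p => by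
  refine ⟨aeval (b K q) p, ?_⟩
  rw [LinearMap.toSpanSingleton_apply, smul_eq_polyRep_apply, ← aeval_algHom_apply, polyRep_b,
    aeval_algHom_apply, aeval_X_left_apply]
  exact mul_one p

end QuantumPlane

theorem quantumPlane_M_not_artinian (K : Type) [Field K] (q : K) :
    ¬ IsArtinian (QuantumPlane K q)
      (QuantumPlane K q ⧸ (Ideal.span {(QuantumPlane.a K q * QuantumPlane.b K q - 1) *
        (QuantumPlane.a K q - 1)} : Ideal (QuantumPlane K q))) := by
  intro _
  have hI :=
    QuantumPlane.span_mul_a_sub_one_le_ker K q (QuantumPlane.a K q * QuantumPlane.b K q - 1)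
  have hsurj : Function.Surjective (Submodule.liftQ _ _ hI) := by
    rw [← LinearMap.range_eq_top, Submodule.range_liftQ, LinearMap.range_eq_top]
    exact QuantumPlane.surjective_toSpanSingleton_one K q
  exact QuantumPlane.not_isArtinian_polynomial K q (isArtinian_of_surjective _ _ hsurj)

end
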